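/- For every M > 0, the 3×3 real matrix C_M = [[0, 2, 0], [−M, 0, 1], [2M, −2M, 0]], which is the coefficient matrix of the linear ODE system A_{2,0}' = 2A_{1,1}, A_{1,1}' = A_{0,2} − M A_{2,0}, A_{0,2}' = 2M(M + A_{2,0} − A_{1,1}), has at least one eigenvalue with positive real part. Moreover, the unique steady state of this system, namely the solution of 2A_{1,1} = 0, A_{0,2} = M A_{2,0}, M + A_{2,0} − A_{1,1} = 0, has negative A_{2,0}- and A_{0,2}-components. -/

import Mathlib

/-!
The characteristic polynomial of `C_M` is `X³ + 4MX - 4M`, which is `-4M < 0` at `0` and `1 > 0`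
at `1`, so it has a real root in `(0, 1)`. The steady-state equations force
`(A_{2,0}, A_{1,1}, A_{0,2}) = (-M, 0, -M²)`.
-/

/-- The coefficient matrix of the second-order moment system of Model B,
unknowns ordered as `(A_{2,0}, A_{1,1}, A_{0,2})`. -/
noncomputable def CmatB (M : ℝ) : Matrix (Fin 3) (Fin 3) ℝ :=
  !![0, 2, 0; -M, 0, 1; 2 * M, -2 * M, 0]

open Polynomial Set

theorem CmatB_charpoly (M : ℝ) :
    (CmatB M).charpoly = X ^ 3 + C (4 * M) * X - C (4 * M) := by
  simp [Matrix.charpoly, Matrix.det_fin_three, CmatB, map_ofNat]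
  ring

theorem exists_root_cubic_mem_Ioo {p : ℝ} (hp : 0 < p) :
    ∃ r ∈ Ioo (0 : ℝ) 1, r ^ 3 + p * r - p = 0 := by
  have hf : ContinuousOn (fun x : ℝ => x ^ 3 + p * x - p) (Icc 0 1) := by fun_prop
  exact intermediate_value_Ioo zero_le_one hf ⟨by simpa using hp, by simp⟩

theorem modelB_steady_state {M a b c : ℝ} (hM : M ≠ 0) (h₁ : 2 * b = 0) (h₂ : c - M * a = 0)
    (h₃ : 2 * M * (M + a - b) = 0) : a = -M ∧ c = -M ^ 2 := by
  have hb : b = 0 := by linarith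
  have ha : a = -M := by
    have := (mul_eq_zero.mp h₃).resolve_left (by positivity)
    linarith
  exact ⟨ha, by rw [sub_eq_zero.mp h₂, ha]; ring⟩

/-- For every `M > 0`, `C_M` has at least one (complex) eigenvalue with positive real
part, and the unique steady state of the associated affine system has negative
`A_{2,0}`- and `A_{0,2}`-components. -/
theorem modelB_always_unstable (M : ℝ) (hM : 0 < M) :
    (∃ z : ℂ,
      (Matrix.charpoly ((CmatB M).map (Complex.ofReal))).IsRoot z ∧ 0 < z.re) ∧
    (∀ a b c : ℝ, 2 * b = 0 → c - M * a = 0 → 2 * M * (M + a - b) = 0 →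
      a < 0 ∧ c < 0) := by
  refine ⟨?_, fun a b c h₁ h₂ h₃ => ?_⟩
  · obtain ⟨r, hr, hroot⟩ := exists_root_cubic_mem_Ioo (by positivity : 0 < 4 * M)
    have hreal : (CmatB M).charpoly.IsRoot r := by simp [CmatB_charpoly, hroot]
    refine ⟨r, ?_, by simpa using hr.1⟩
    rw [show Complex.ofReal = ⇑Complex.ofRealHom from rfl, Matrix.charpoly_map]
    exact hreal.map
  · obtain ⟨rfl, rfl⟩ := modelB_steady_state hM.ne' h₁ h₂ h₃
    exact ⟨by linarith, by nlinarith⟩
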